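/- arXiv:2301.05354 — 2 statements merged into one kernel-verified Lean document; each statement's English description precedes it below -/
import Mathlib

section
/- Let a, b ≥ 0 and μ̲ ≤ μ̄. For every continuous φ : ℝ → ℝ, max_{x ∈ [μ̲,μ̄]} max_{y ∈ [μ̲,μ̄]} φ(a·x + b·y) = max_{μ ∈ [μ̲,μ̄]} φ((a+b)·μ). In particular, if X is maximally distributed on [μ̲,μ̄] and X̄ is an independent copy, then aX + bX̄ has the same sublinear distribution as (a+b)X. -/
/-!
For `a, b ≥ 0` the points `a * x + b * y` with `x, y ∈ [μl, μu]` are exactly the points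
`(a + b) * μ` with `μ ∈ [μl, μu]`: one direction takes `x = y = μ`, the other the convex
combination `μ = (a * x + b * y) / (a + b)`. Hence both suprema run over the same values of `φ`,
which are bounded because `φ` is continuous on a compact interval.
-/

open Set

namespace Real

variable {α : Type*} {f : α → ℝ} {s : Set α}

theorem bddAbove_iUnion_range_of_mem (hf : BddAbove (f '' s)) :
    BddAbove (⋃ x, range fun _ : x ∈ s => f x) :=
  hf.mono <| by
    rintro _ ⟨_, ⟨x, rfl⟩, hx, rfl⟩
    exact ⟨x, hx, rfl⟩

theorem le_biSup (hf : BddAbove (f '' s)) {x : α} (hx : x ∈ s) : f x ≤ ⨆ x ∈ s, f x :=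
  le_ciSup₂ (f := fun x (_ : x ∈ s) => f x) (bddAbove_iUnion_range_of_mem hf) x hx

theorem biSup_le {c : ℝ} (h : ∀ x ∈ s, f x ≤ c) (hc : 0 ≤ c) : ⨆ x ∈ s, f x ≤ c :=
  Real.iSup_le (fun x => Real.iSup_le (h x) hc) hc

/-- Outside `s` the inner supremum `⨆ _ : x ∈ s, f x` is the junk value `sSup ∅ = 0`. -/
theorem biSup_nonneg_of_compl_nonempty (hf : BddAbove (f '' s)) (hs : sᶜ.Nonempty) :
    0 ≤ ⨆ x ∈ s, f x := by
  obtain ⟨x, hx⟩ := hs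
  have : IsEmpty (x ∈ s) := isEmpty_Prop.2 hx
  refine le_ciSup_of_le (bddAbove_iUnion_range_of_mem hf).range_iSup_of_iUnion_range x ?_
  rw [Real.iSup_of_isEmpty]

end Real

theorem exists_mem_Icc_add_mul_eq {a b x y l u : ℝ} (ha : 0 ≤ a) (hb : 0 ≤ b)
    (hx : x ∈ Icc l u) (hy : y ∈ Icc l u) : ∃ μ ∈ Icc l u, a * x + b * y = (a + b) * μ := by
  rcases (add_nonneg ha hb).eq_or_lt with hab | hab
  · obtain ⟨rfl, rfl⟩ : a = 0 ∧ b = 0 := by constructor <;> linarith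
    exact ⟨x, hx, by ring⟩
  · refine ⟨(a / (a + b)) • x + (b / (a + b)) • y,
      convex_iff_div.1 (convex_Icc l u) hx hy ha hb hab, ?_⟩
    simp only [smul_eq_mul]
    field_simp

theorem maximal_distribution_stability_general (a b : ℝ) (ha : 0 ≤ a) (hb : 0 ≤ b)
    (μl μu : ℝ) (φ : ℝ → ℝ) (hφ : Continuous φ) :
    (⨆ x ∈ Set.Icc μl μu, ⨆ y ∈ Set.Icc μl μu, φ (a * x + b * y))
      = ⨆ μ ∈ Set.Icc μl μu, φ ((a + b) * μ) := by
  set S := Icc μl μu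
  set M := ⨆ μ ∈ S, φ ((a + b) * μ)
  have hS : Sᶜ.Nonempty := ⟨μu + 1, fun h => by linarith [h.2]⟩
  have hbdd : BddAbove ((fun μ => φ ((a + b) * μ)) '' S) :=
    isCompact_Icc.bddAbove_image (by fun_prop)
  have hM : 0 ≤ M := Real.biSup_nonneg_of_compl_nonempty hbdd hS
  have hle : ∀ x ∈ S, ∀ y ∈ S, φ (a * x + b * y) ≤ M := fun x hx y hy => by
    obtain ⟨μ, hμ, hxy⟩ := exists_mem_Icc_add_mul_eq ha hb hx hy
    exact hxy ▸ Real.le_biSup hbdd hμ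
  have hinner : ∀ x ∈ S, ⨆ y ∈ S, φ (a * x + b * y) ≤ M := fun x hx =>
    Real.biSup_le (hle x hx) hM
  refine le_antisymm (Real.biSup_le hinner hM) (Real.biSup_le (fun μ hμ => ?_) ?_)
  · calc φ ((a + b) * μ) = φ (a * μ + b * μ) := by rw [add_mul]
      _ ≤ ⨆ y ∈ S, φ (a * μ + b * y) :=
        Real.le_biSup ⟨M, forall_mem_image.2 (hle μ hμ)⟩ hμ
      _ ≤ _ := Real.le_biSup ⟨M, forall_mem_image.2 hinner⟩ hμ
  · exact Real.biSup_nonneg_of_compl_nonempty ⟨M, forall_mem_image.2 hinner⟩ hS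

theorem maximal_distribution_stability (a b : ℝ) (ha : 0 ≤ a) (hb : 0 ≤ b)
    (μl μu : ℝ) (h : μl ≤ μu) (φ : ℝ → ℝ) (hφ : Continuous φ) :
    (⨆ x ∈ Set.Icc μl μu, ⨆ y ∈ Set.Icc μl μu, φ (a * x + b * y))
      = ⨆ μ ∈ Set.Icc μl μu, φ ((a + b) * μ) :=
  maximal_distribution_stability_general a b ha hb μl μu φ hφ
end

section
/- Let μ̲ ≤ μ̄ and let f : ℝ^n → ℝ be continuous with max_{(μ_1,…,μ_n) ∈ [μ̲,μ̄]^n} f(μ_1,…,μ_n) = μ̄ for all choices of μ̲ ≤ μ̄ (i.e., f is an unbiased estimator of the upper mean for every parameter pair). Then f(x_1,…,x_n) ≤ max(x_1,…,x_n) for all (x_1,…,x_n) ∈ ℝ^n; i.e., max(X_1,…,X_n) is the largest unbiased estimator of μ̄. -/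
/-!
The sample `x` lies in the box `[a, max x]ⁿ` for any lower bound `a ≤ max x` of its coordinates,
so `f x` is at most the supremum of `f` over that box, which unbiasedness makes `max x`.
For `f x` to be bounded by that supremum, `f` must be bounded above on the box; this also follows
from unbiasedness: on a set that is not bounded above `sSup` takes the junk value `sSup ∅`, so the
nested boxes `[a, b]ⁿ ⊆ [a, b + 1]ⁿ` would have the same supremum, not `b` and `b + 1`.
-/

open Set

theorem BddAbove.of_subset_of_csSup_ne {α : Type*} [ConditionallyCompleteLinearOrder α]
    {s t : Set α} (hst : s ⊆ t) (h : sSup s ≠ sSup t) : BddAbove s := by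
  by_contra hs
  exact h ((csSup_of_not_bddAbove hs).trans
    (csSup_of_not_bddAbove fun ht => hs (ht.mono hst)).symm)

section Unbiased

variable {ι : Type*} {f : (ι → ℝ) → ℝ}
  (hunbiased : ∀ a b : ℝ, a ≤ b → sSup (f '' {μ : ι → ℝ | ∀ i, μ i ∈ Icc a b}) = b)
include hunbiased

theorem bddAbove_image_box_of_sSup_eq {a b : ℝ} (hab : a ≤ b) :
    BddAbove (f '' {μ : ι → ℝ | ∀ i, μ i ∈ Icc a b}) := by
  have hbox : {μ : ι → ℝ | ∀ i, μ i ∈ Icc a b} ⊆ {μ | ∀ i, μ i ∈ Icc a (b + 1)} :=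
    fun μ hμ i => ⟨(hμ i).1, (hμ i).2.trans (le_add_of_nonneg_right zero_le_one)⟩
  refine BddAbove.of_subset_of_csSup_ne (image_mono hbox) ?_
  rw [hunbiased a b hab, hunbiased a (b + 1) (by linarith)]
  linarith

theorem apply_le_of_mem_box_of_sSup_eq {a b : ℝ} (hab : a ≤ b) {x : ι → ℝ}
    (hx : ∀ i, x i ∈ Icc a b) : f x ≤ b :=
  (le_csSup (bddAbove_image_box_of_sSup_eq hunbiased hab) ⟨x, hx, rfl⟩).trans_eq
    (hunbiased a b hab)

end Unbiased

theorem max_is_largest_unbiased_estimator_general (n : ℕ)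
    (f : (Fin n → ℝ) → ℝ)
    (hunbiased : ∀ a b : ℝ, a ≤ b →
      sSup (f '' {μ : Fin n → ℝ | ∀ i, μ i ∈ Set.Icc a b}) = b) :
    ∀ x : Fin n → ℝ, f x ≤ ⨆ i, x i := by
  intro x
  obtain ⟨a, ha⟩ := (finite_range x).bddBelow
  have hle_iSup : ∀ i, x i ≤ ⨆ j, x j := le_ciSup (finite_range x).bddAbove
  exact apply_le_of_mem_box_of_sSup_eq hunbiased (min_le_right a _)
    fun i => ⟨(min_le_left _ _).trans (ha ⟨i, rfl⟩), hle_iSup i⟩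

theorem max_is_largest_unbiased_estimator (n : ℕ) (hn : 1 ≤ n)
    (f : (Fin n → ℝ) → ℝ) (hf : Continuous f)
    (hunbiased : ∀ a b : ℝ, a ≤ b →
      sSup (f '' {μ : Fin n → ℝ | ∀ i, μ i ∈ Set.Icc a b}) = b) :
    ∀ x : Fin n → ℝ, f x ≤ ⨆ i, x i :=
  max_is_largest_unbiased_estimator_general n f hunbiased
end
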